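/- Let ψ_1, …, ψ_n : ℝ_{>0} → ℝ_{>0} be functions for which there exists a positive integer Q₀ such that q²·ψ_l(q) < 1/1000 for all q ≥ Q₀ and all 1 ≤ l ≤ n. Then for any ball B ⊂ [0,1] of radius |B| and any integer Q satisfying Q ≥ max{10000·|B|^{−1}·log(1/|B|), 9Q₀}, there exist at least ⌊|B|·Q²/80⌋ rational numbers p_i/q_i contained in B such that: (1) for each i, Q/9 ≤ q_i ≤ Q and gcd(p_i, q_i) = 1; and (2) for every integer k ≥ 1, every 1 ≤ l ≤ n, and every pair of distinct indices i ≠ j, the interval C_k(p_i/q_i, ψ_l) is contained in B and the distance between C_k(p_i/q_i, ψ_l) and C_k(p_j/q_j, ψ_l) is greater than 1/(2Q²). -/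

import Mathlib

/-!
Take for `S` the reduced fractions `p / q` with `Q / 9 < q ≤ Q` lying in `B` at distance at
least `1 / Q` from its boundary. The fractions with denominator at most `Q` in that interval
number about `r Q²`. A reduced fraction `p' / q'` occurs among them as `g p' / g q'` for
`⌊Q / q'⌋` values of `g`; by the harmonic bound `∑_{q ≤ Q} 1 / q ≤ 1 + log Q` the reduced
fractions with denominator at most `Q / 9` produce at most about `2 r Q² / 9` of them, and each
element of `S` at most eight. Hence `8 #S ≳ 7 r Q² / 9`, and the lower bound on `Q` keeps the
error terms (of size `Q log Q`) below what is needed for `#S ≥ r Q² / 80`.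

For `q ≥ Q₀` with `Q < 9 q` we have `ψ(q) < 81 / (1000 Q²)`, so `C_k(p/q, ψ)` is a nonempty
subinterval of `(p/q, p/q + ψ(q)) ⊆ B`. Distinct reduced fractions with denominators at most `Q`
are at least `1 / Q²` apart, hence the intervals `C_k` are more than `1 / (2 Q²)` apart.
-/

open MeasureTheory Filter
open scoped ENNReal Topology

/-- `C_k(p/q, ψ) = {x ∈ [0,1] : (1 - 2⁻ᵏ)·ψ(q) < x - p/q < ψ(q)}`. -/
noncomputable def Ckset (k : ℕ) (ψ : ℝ → ℝ) (p : ℤ) (q : ℕ) : Set ℝ :=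
  {x ∈ Set.Icc (0:ℝ) 1 |
    (1 - (2:ℝ) ^ (-(k:ℤ))) * ψ q < x - p / q ∧ x - p / q < ψ q}

/-- Distance between two sets of reals: `inf {|x - y| : x ∈ I, y ∈ J}`. -/
noncomputable def setDist (I J : Set ℝ) : ℝ :=
  sInf (Set.image2 (fun x y => |x - y|) I J)

open Finset Real

noncomputable def numeratorsIcc (a b : ℝ) (q : ℕ) : Finset ℤ := Icc ⌈a * q⌉ ⌊b * q⌋

noncomputable def coprimeNumeratorsIcc (a b : ℝ) (q : ℕ) : Finset ℤ :=
  {p ∈ numeratorsIcc a b q | Int.gcd p q = 1}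

noncomputable def reducedFractionsIcc (a b : ℝ) (s : Finset ℕ) : Finset (ℤ × ℕ) :=
  (s.sigma (coprimeNumeratorsIcc a b)).map
    ((Equiv.sigmaEquivProd ℕ ℤ).trans (Equiv.prodComm ℕ ℤ)).toEmbedding

section Counting

variable {a b : ℝ}

lemma mem_numeratorsIcc {q : ℕ} (hq : 0 < q) {p : ℤ} :
    p ∈ numeratorsIcc a b q ↔ a ≤ p / q ∧ (p : ℝ) / q ≤ b := by
  have hq' : (0 : ℝ) < q := Nat.cast_pos.mpr hq
  simp only [numeratorsIcc, mem_Icc, Int.ceil_le, Int.le_floor, le_div_iff₀ hq',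
    div_le_iff₀ hq']

lemma mem_reducedFractionsIcc {s : Finset ℕ} {pq : ℤ × ℕ} :
    pq ∈ reducedFractionsIcc a b s ↔
      pq.2 ∈ s ∧ pq.1 ∈ numeratorsIcc a b pq.2 ∧ Int.gcd pq.1 pq.2 = 1 := by
  rw [reducedFractionsIcc, mem_map_equiv, mem_sigma, coprimeNumeratorsIcc, mem_filter]
  rfl

lemma mem_reducedFractionsIcc_Ioc_div {m Q : ℕ} (hm : 0 < m) {pq : ℤ × ℕ}
    (h : pq ∈ reducedFractionsIcc a b (Ioc (Q / m) Q)) :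
    (Q < m * pq.2 ∧ pq.2 ≤ Q ∧ Int.gcd pq.1 pq.2 = 1) ∧
      a ≤ pq.1 / pq.2 ∧ (pq.1 : ℝ) / pq.2 ≤ b := by
  obtain ⟨hq, hp, hcop⟩ := mem_reducedFractionsIcc.mp h
  rw [mem_Ioc, Nat.div_lt_iff_lt_mul hm, mul_comm] at hq
  have hq0 : 0 < pq.2 := Nat.pos_of_mul_pos_left (Nat.zero_lt_of_lt hq.1)
  exact ⟨⟨hq.1, hq.2, hcop⟩, (mem_numeratorsIcc hq0).mp hp⟩

lemma card_reducedFractionsIcc (s : Finset ℕ) :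
    #(reducedFractionsIcc a b s) = ∑ q ∈ s, #(coprimeNumeratorsIcc a b q) := by
  rw [reducedFractionsIcc, card_map, card_sigma]

lemma sub_one_le_card_numeratorsIcc (q : ℕ) : (b - a) * q - 1 ≤ #(numeratorsIcc a b q) := by
  rw [numeratorsIcc, Int.card_Icc]
  have h := Int.self_le_toNat (⌊b * q⌋ + 1 - ⌈a * q⌉)
  have hb := Int.sub_one_lt_floor (b * q)
  have ha := Int.ceil_lt_add_one (a * q)
  have h' : ((⌊b * q⌋ + 1 - ⌈a * q⌉ : ℤ) : ℝ) ≤ ((⌊b * q⌋ + 1 - ⌈a * q⌉).toNat : ℤ) := by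
    exact_mod_cast h
  push_cast at h'
  linarith

lemma card_numeratorsIcc_le (hab : a ≤ b) (q : ℕ) : #(numeratorsIcc a b q) ≤ (b - a) * q + 1 := by
  rw [numeratorsIcc, Int.card_Icc]
  have hb := Int.floor_le (b * q)
  have ha := Int.le_ceil (a * q)
  have h : (((⌊b * q⌋ + 1 - ⌈a * q⌉).toNat : ℤ) : ℝ) ≤ (b - a) * q + 1 := by
    rw [Int.toNat_eq_max, Int.cast_max]
    exact max_le (by push_cast; linarith) (by push_cast; nlinarith [q.cast_nonneg (α := ℝ)])
  exact_mod_cast h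

lemma exists_coprime_mul (p : ℤ) {q : ℕ} (hq : 0 < q) :
    ∃ g q' : ℕ, ∃ p' : ℤ, 0 < g ∧ Int.gcd p' q' = 1 ∧ q = g * q' ∧ p = g * p' := by
  obtain ⟨g, p', q', hg, hcop, hp, hq'⟩ :=
    Int.exists_gcd_one' (m := p) (n := q) (Int.gcd_pos_of_ne_zero_right _ (by omega))
  have hq'0 : 0 ≤ q' := by nlinarith
  refine ⟨g, q'.toNat, p', hg, by rwa [Int.toNat_of_nonneg hq'0], ?_, by rw [hp, mul_comm]⟩
  zify
  rw [Int.toNat_of_nonneg hq'0, hq', mul_comm]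

lemma sum_card_numeratorsIcc_le (Q : ℕ) :
    ∑ q ∈ Ioc 0 Q, #(numeratorsIcc a b q) ≤
      ∑ q ∈ Ioc 0 Q, #(coprimeNumeratorsIcc a b q) * (Q / q) := by
  have hdom : ∑ q ∈ Ioc 0 Q, #(coprimeNumeratorsIcc a b q) * (Q / q) =
      #((Ioc 0 Q).sigma fun q => coprimeNumeratorsIcc a b q ×ˢ Ioc 0 (Q / q)) := by
    simp [card_sigma, card_product]
  rw [hdom, ← card_sigma]
  refine card_le_card_of_surjOn
    (fun x => (⟨x.2.2 * x.1, x.2.2 * x.2.1⟩ : Σ _ : ℕ, ℤ)) ?_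
  rintro ⟨q, p⟩ hqp
  simp only [coe_sigma, Set.mem_sigma_iff, mem_coe, mem_Ioc] at hqp
  obtain ⟨⟨hq, hqQ⟩, hp⟩ := hqp
  obtain ⟨g, q', p', hg, hcop, rfl, rfl⟩ := exists_coprime_mul p hq
  have hq' : 0 < q' := Nat.pos_of_mul_pos_left hq
  refine ⟨⟨q', p', g⟩, ?_, rfl⟩
  simp only [coe_sigma, Set.mem_sigma_iff, mem_coe, mem_Ioc, mem_product, coprimeNumeratorsIcc,
    mem_filter]
  refine ⟨⟨hq', le_of_mul_le_of_one_le_right hqQ hg⟩, ⟨?_, hcop⟩, hg,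
    (Nat.le_div_iff_mul_le hq').2 hqQ⟩
  rw [mem_numeratorsIcc hq] at hp
  rw [mem_numeratorsIcc hq']
  have hg' : (g : ℝ) ≠ 0 := by positivity
  push_cast at hp
  rwa [mul_div_mul_left _ _ hg'] at hp

lemma sum_Ioc_zero_natCast (n : ℕ) : ∑ q ∈ Ioc 0 n, (q : ℝ) = n * (n + 1) / 2 := by
  induction n with
  | zero => simp
  | succ n ih => rw [sum_Ioc_succ_top (Nat.zero_le n), ih]; push_cast; ring

lemma sum_Ioc_zero_inv_le_one_add_log (n : ℕ) : ∑ q ∈ Ioc 0 n, (q : ℝ)⁻¹ ≤ 1 + log n := by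
  have h := harmonic_le_one_add_log n
  have hIcc : Icc 1 n = Ioc 0 n := by ext; simp only [mem_Icc, mem_Ioc]; omega
  simpa [harmonic_eq_sum_Icc, hIcc] using h

lemma sum_card_numeratorsIcc_ge (hab : a ≤ b) (Q : ℕ) :
    (b - a) * Q ^ 2 / 2 - Q ≤ ∑ q ∈ Ioc 0 Q, (#(numeratorsIcc a b q) : ℝ) := by
  calc (b - a) * Q ^ 2 / 2 - Q
      ≤ (b - a) * (Q * (Q + 1) / 2) - Q := by nlinarith [Q.cast_nonneg (α := ℝ)]
    _ = ∑ q ∈ Ioc 0 Q, ((b - a) * q - 1) := by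
      rw [sum_sub_distrib, ← mul_sum, sum_Ioc_zero_natCast]
      simp
    _ ≤ _ := sum_le_sum fun q _ => sub_one_le_card_numeratorsIcc q

lemma sum_card_coprimeNumeratorsIcc_mul_div_le (hab : a ≤ b) {q₁ Q : ℕ} (hq₁ : q₁ ≤ Q) :
    ∑ q ∈ Ioc 0 q₁, ((#(coprimeNumeratorsIcc a b q) * (Q / q) : ℕ) : ℝ) ≤
      q₁ * ((b - a) * Q) + Q * (1 + log Q) := by
  have hterm : ∀ q ∈ Ioc 0 q₁,
      ((#(coprimeNumeratorsIcc a b q) * (Q / q) : ℕ) : ℝ) ≤ (b - a) * Q + Q * (q : ℝ)⁻¹ := by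
    intro q hq
    have hq' : (0 : ℝ) < q := by simp only [mem_Ioc] at hq; exact_mod_cast hq.1
    have hcard : (#(coprimeNumeratorsIcc a b q) : ℝ) ≤ (b - a) * q + 1 :=
      le_trans (by exact_mod_cast card_filter_le _ _) (card_numeratorsIcc_le hab q)
    push_cast
    calc (#(coprimeNumeratorsIcc a b q) : ℝ) * ((Q / q : ℕ) : ℝ)
        ≤ ((b - a) * q + 1) * (Q / q) :=
          mul_le_mul hcard Nat.cast_div_le (by positivity) (by nlinarith)
      _ = (b - a) * Q + Q * (q : ℝ)⁻¹ := by field_simp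
  have hharm : ∑ q ∈ Ioc 0 q₁, (q : ℝ)⁻¹ ≤ 1 + log Q :=
    (sum_le_sum_of_subset_of_nonneg (Ioc_subset_Ioc_right hq₁) fun _ _ _ => by positivity).trans
      (sum_Ioc_zero_inv_le_one_add_log Q)
  calc _ ≤ ∑ q ∈ Ioc 0 q₁, ((b - a) * Q + Q * (q : ℝ)⁻¹) := sum_le_sum hterm
    _ = q₁ * ((b - a) * Q) + Q * ∑ q ∈ Ioc 0 q₁, (q : ℝ)⁻¹ := by
      rw [sum_add_distrib, sum_const, ← mul_sum]
      simp
    _ ≤ _ := by gcongr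

lemma sum_Ioc_mul_div_le (f : ℕ → ℕ) {m : ℕ} (hm : 0 < m) (Q : ℕ) :
    ∑ q ∈ Ioc (Q / m) Q, f q * (Q / q) ≤ (m - 1) * ∑ q ∈ Ioc (Q / m) Q, f q := by
  rw [mul_sum]
  refine sum_le_sum fun q hq => ?_
  rw [mem_Ioc, Nat.div_lt_iff_lt_mul hm] at hq
  have hq0 : 0 < q := Nat.pos_of_mul_pos_right (Nat.zero_lt_of_lt hq.1)
  have hQq : Q / q < m := (Nat.div_lt_iff_lt_mul hq0).2 (by rw [mul_comm]; exact hq.1)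
  rw [mul_comm]
  exact Nat.mul_le_mul_right _ (by omega)

theorem sum_card_coprimeNumeratorsIcc_ge (hab : a ≤ b) {m : ℕ} (hm : 0 < m) (Q : ℕ) :
    (b - a) * Q ^ 2 * (1 / 2 - 1 / m) - Q * (2 + log Q) ≤
      ((m - 1 : ℕ) : ℝ) * ∑ q ∈ Ioc (Q / m) Q, (#(coprimeNumeratorsIcc a b q) : ℝ) := by
  set c := fun q => #(coprimeNumeratorsIcc a b q)
  have hsplit := sum_Ioc_consecutive (fun q => c q * (Q / q)) (Nat.zero_le (Q / m))
    (Nat.div_le_self Q m)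
  have hcount : (∑ q ∈ Ioc 0 Q, (#(numeratorsIcc a b q) : ℝ)) ≤
      ∑ q ∈ Ioc 0 (Q / m), ((c q * (Q / q) : ℕ) : ℝ) +
        ∑ q ∈ Ioc (Q / m) Q, ((c q * (Q / q) : ℕ) : ℝ) := by
    have h := sum_card_numeratorsIcc_le (a := a) (b := b) Q
    rw [← hsplit] at h
    exact_mod_cast h
  have hlarge : ∑ q ∈ Ioc (Q / m) Q, ((c q * (Q / q) : ℕ) : ℝ) ≤
      ((m - 1 : ℕ) : ℝ) * ∑ q ∈ Ioc (Q / m) Q, (c q : ℝ) := by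
    exact_mod_cast sum_Ioc_mul_div_le c hm Q
  have hsmall := sum_card_coprimeNumeratorsIcc_mul_div_le hab (Nat.div_le_self Q m)
  have hq₁ : ((Q / m : ℕ) : ℝ) * ((b - a) * Q) ≤ Q / m * ((b - a) * Q) :=
    mul_le_mul_of_nonneg_right Nat.cast_div_le (mul_nonneg (by linarith) (by positivity))
  have hm' : (0 : ℝ) < m := by exact_mod_cast hm
  have hid : (Q : ℝ) / m * ((b - a) * Q) = (b - a) * Q ^ 2 * (1 / m) := by field_simp
  have hlow := sum_card_numeratorsIcc_ge hab Q
  nlinarith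

theorem card_reducedFractionsIcc_ge {x₀ r : ℝ} {Q : ℕ} (hr : 0 < r) (hrQ : 16 ≤ r * Q)
    (hlog : log (1 / r) ≤ r * Q / 10000) :
    r * Q ^ 2 / 80 ≤ #(reducedFractionsIcc (x₀ - r + 1 / Q) (x₀ + r - 1 / Q) (Ioc (Q / 9) Q)) := by
  have hQ : (0 : ℝ) < Q := pos_of_mul_pos_right (by linarith) hr.le
  have hlogQ : log Q ≤ r * Q / 2 - 1 + log 2 + log (1 / r) := by
    have h := log_le_sub_one_of_pos (x := r * Q / 2) (by positivity)
    rw [log_div (by positivity) two_ne_zero, log_mul hr.ne' hQ.ne'] at h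
    rw [one_div, log_inv]
    linarith
  have hab : x₀ - r + 1 / Q ≤ x₀ + r - 1 / Q := by
    have : 1 / (Q : ℝ) ≤ r := by rw [div_le_iff₀ hQ]; linarith
    linarith
  have key := sum_card_coprimeNumeratorsIcc_ge hab (m := 9) (by norm_num) Q
  have hba : (x₀ + r - 1 / Q - (x₀ - r + 1 / Q)) * Q ^ 2 = 2 * r * Q ^ 2 - 2 * Q := by
    field_simp; ring
  rw [card_reducedFractionsIcc, Nat.cast_sum]
  rw [hba, show (1 : ℝ) / 2 - 1 / ((9 : ℕ) : ℝ) = 7 / 18 by norm_num,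
    show ((9 - 1 : ℕ) : ℝ) = 8 by norm_num] at key
  nlinarith [mul_le_mul_of_nonneg_left hlogQ hQ.le, log_two_lt_d9]

end Counting

lemma Ckset_subset_Ioo (k : ℕ) (ψ : ℝ → ℝ) (p : ℤ) (q : ℕ) :
    Ckset k ψ p q ⊆ Set.Ioo (p / q) (p / q + ψ q) := by
  rintro x ⟨-, hlo, hhi⟩
  have he : 0 < (2 : ℝ) ^ (-(k : ℤ)) := by positivity
  have he1 : (2 : ℝ) ^ (-(k : ℤ)) ≤ 1 := zpow_le_one_of_nonpos₀ one_le_two (by omega)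
  have hψ : 0 < ψ q := by nlinarith
  constructor <;> nlinarith

lemma Ckset_nonempty (k : ℕ) {ψ : ℝ → ℝ} {p : ℤ} {q : ℕ} (hψ : 0 < ψ q)
    (h0 : 0 ≤ (p : ℝ) / q) (h1 : (p : ℝ) / q + ψ q ≤ 1) : (Ckset k ψ p q).Nonempty := by
  have he : 0 < (2 : ℝ) ^ (-(k : ℤ)) := by positivity
  have he1 : (2 : ℝ) ^ (-(k : ℤ)) ≤ 1 := zpow_le_one_of_nonpos₀ one_le_two (by omega)
  refine ⟨p / q + (1 - (2 : ℝ) ^ (-(k : ℤ)) / 2) * ψ q, ⟨?_, ?_⟩, ?_, ?_⟩ <;> nlinarith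

lemma sub_le_setDist {I J : Set ℝ} {u v δ : ℝ} (hI : I.Nonempty) (hJ : J.Nonempty)
    (hIu : I ⊆ Set.Ioo u (u + δ)) (hJv : J ⊆ Set.Ioo v (v + δ)) : |u - v| - δ ≤ setDist I J := by
  refine le_csInf (hI.image2 hJ) ?_
  rintro _ ⟨x, hx, y, hy, rfl⟩
  obtain ⟨hx₁, hx₂⟩ := hIu hx
  obtain ⟨hy₁, hy₂⟩ := hJv hy
  rw [sub_le_iff_le_add, abs_sub_le_iff]
  constructor <;> linarith [le_abs_self (x - y), neg_abs_le (x - y)]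

lemma one_div_mul_le_abs_div_sub_div {p p' : ℤ} {q q' : ℕ} (hq : 0 < q) (hq' : 0 < q')
    (hne : (p : ℝ) / q ≠ p' / q') : 1 / (q * q') ≤ |(p : ℝ) / q - p' / q'| := by
  have hq₀ : (q : ℝ) ≠ 0 := by positivity
  have hq₀' : (q' : ℝ) ≠ 0 := by positivity
  have hcross : p * q' - p' * q ≠ 0 := by
    refine fun h => hne ?_
    rw [div_eq_div_iff hq₀ hq₀']
    exact_mod_cast sub_eq_zero.mp h
  have h1 : (1 : ℝ) ≤ |(p : ℝ) * q' - p' * q| := by exact_mod_cast Int.one_le_abs hcross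
  rw [div_sub_div _ _ hq₀ hq₀', abs_div, abs_of_pos (by positivity : (0 : ℝ) < q * q'),
    mul_comm (q : ℝ) p']
  gcongr

lemma div_ne_div_of_gcd_eq_one {p p' : ℤ} {q q' : ℕ} (hq : 0 < q) (hq' : 0 < q')
    (h : Int.gcd p q = 1) (h' : Int.gcd p' q' = 1) (hne : (p, q) ≠ (p', q')) :
    (p : ℝ) / q ≠ p' / q' := by
  intro heq
  obtain ⟨rfl, hqq⟩ := Rat.div_int_inj (a := p) (b := q) (c := p') (d := q')
    (by exact_mod_cast hq) (by exact_mod_cast hq') h h' (by exact_mod_cast heq)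
  exact hne (by rw [Nat.cast_inj.mp hqq])

lemma one_div_two_mul_sq_lt_setDist {k : ℕ} {ψ : ℝ → ℝ} {p p' : ℤ} {q q' Q : ℕ}
    (hq : 0 < q) (hq' : 0 < q') (hqQ : q ≤ Q) (hq'Q : q' ≤ Q) (hne : (p : ℝ) / q ≠ p' / q')
    (hC : (Ckset k ψ p q).Nonempty) (hC' : (Ckset k ψ p' q').Nonempty)
    (hψ : ψ q < 1 / (2 * Q ^ 2)) (hψ' : ψ q' < 1 / (2 * Q ^ 2)) :
    1 / (2 * Q ^ 2) < setDist (Ckset k ψ p q) (Ckset k ψ p' q') := by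
  set δ := max (ψ q) (ψ q')
  have hsub : ∀ {p : ℤ} {q : ℕ}, ψ q ≤ δ → Ckset k ψ p q ⊆ Set.Ioo (p / q) (p / q + δ) :=
    fun h => (Ckset_subset_Ioo k ψ _ _).trans (Set.Ioo_subset_Ioo_right (by linarith))
  have hdist := sub_le_setDist hC hC' (hsub (le_max_left _ _)) (hsub (le_max_right _ _))
  have hsep : 1 / (Q : ℝ) ^ 2 ≤ |(p : ℝ) / q - p' / q'| := by
    refine le_trans ?_ (one_div_mul_le_abs_div_sub_div hq hq' hne)
    rw [sq]
    gcongr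
  have hδ : δ < 1 / (2 * Q ^ 2) := max_lt hψ hψ'
  have hhalf : 1 / (2 * (Q : ℝ) ^ 2) = 1 / Q ^ 2 - 1 / (2 * Q ^ 2) := by ring
  linarith

lemma le_sub_and_add_le_of_ball_subset_Icc {x r a b : ℝ} (hr : 0 < r)
    (h : Metric.ball x r ⊆ Set.Icc a b) : a ≤ x - r ∧ x + r ≤ b := by
  have h' : Set.Icc (x - r) (x + r) ⊆ Set.Icc a b := by
    rw [← closure_Ioo (by linarith : x - r ≠ x + r), ← Real.ball_eq_Ioo]
    exact closure_minimal h isClosed_Icc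
  exact (Set.Icc_subset_Icc_iff (by linarith)).mp h'

lemma Ckset_nonempty_and_subset_ball (k : ℕ) {ψ : ℝ → ℝ} {p : ℤ} {q : ℕ} {x₀ r : ℝ} (hr : 0 < r)
    (hB : Metric.ball x₀ r ⊆ Set.Icc 0 1) (hψ : 0 < ψ q) (hlo : x₀ - r ≤ p / q)
    (hhi : p / q + ψ q ≤ x₀ + r) :
    (Ckset k ψ p q).Nonempty ∧ Ckset k ψ p q ⊆ Metric.ball x₀ r := by
  obtain ⟨h0, h1⟩ := le_sub_and_add_le_of_ball_subset_Icc hr hB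
  refine ⟨Ckset_nonempty k hψ (by linarith) (by linarith), (Ckset_subset_Ioo k ψ p q).trans ?_⟩
  rw [Real.ball_eq_Ioo]
  exact Set.Ioo_subset_Ioo hlo hhi

lemma log_inv_le_and_le_mul {r Q : ℝ} (hr : 0 < r) (hr2 : r ≤ 1 / 2)
    (hQ : 10000 * r⁻¹ * log (1 / r) ≤ Q) : log (1 / r) ≤ r * Q / 10000 ∧ 16 ≤ r * Q := by
  rw [mul_comm 10000 r⁻¹, mul_assoc, inv_mul_le_iff₀ hr] at hQ
  have hlog2 : log 2 ≤ log (1 / r) := log_le_log two_pos (by rw [le_div_iff₀ hr]; linarith)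
  constructor <;> linarith [log_two_gt_d9]

theorem stmt_6 (n : ℕ) (ψ : Fin n → ℝ → ℝ)
    (hpos : ∀ i, ∀ x : ℝ, 0 < x → 0 < ψ i x)
    (Q₀ : ℕ)
    (hsmall : ∀ i, ∀ q : ℕ, Q₀ ≤ q → (q : ℝ) ^ 2 * ψ i q < 1 / 1000)
    (x₀ r : ℝ) (hr : 0 < r) (hB : Metric.ball x₀ r ⊆ Set.Icc (0:ℝ) 1)
    (Q : ℕ) (hQ1 : 10000 * r⁻¹ * Real.log (1 / r) ≤ (Q : ℝ)) (hQ2 : 9 * Q₀ ≤ Q) :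
    ∃ S : Finset (ℤ × ℕ),
      (⌊r * (Q : ℝ) ^ 2 / 80⌋ ≤ (S.card : ℤ)) ∧
      (∀ pq ∈ S, ((pq.1 : ℝ) / (pq.2 : ℝ)) ∈ Metric.ball x₀ r) ∧
      (∀ pq ∈ S, (Q : ℝ) / 9 ≤ (pq.2 : ℝ) ∧ pq.2 ≤ Q ∧ Int.gcd pq.1 (pq.2 : ℤ) = 1) ∧
      (∀ k : ℕ, 1 ≤ k → ∀ i : Fin n, ∀ pq ∈ S,
        Ckset k (ψ i) pq.1 pq.2 ⊆ Metric.ball x₀ r) ∧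
      (∀ k : ℕ, 1 ≤ k → ∀ i : Fin n, ∀ pq ∈ S, ∀ pq' ∈ S, pq ≠ pq' →
        1 / (2 * (Q : ℝ) ^ 2) < setDist (Ckset k (ψ i) pq.1 pq.2) (Ckset k (ψ i) pq'.1 pq'.2)) := by
  obtain ⟨hx₀r, hx₀r'⟩ := le_sub_and_add_le_of_ball_subset_Icc hr hB
  obtain ⟨hlog, hrQ⟩ := log_inv_le_and_le_mul hr (by linarith) hQ1
  have hQ : (1 : ℝ) ≤ Q := by nlinarith
  have hQ' : 0 < 1 / (Q : ℝ) := by positivity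
  set S := reducedFractionsIcc (x₀ - r + 1 / Q) (x₀ + r - 1 / Q) (Ioc (Q / 9) Q)
  have hS := fun pq (h : pq ∈ S) => mem_reducedFractionsIcc_Ioc_div (by norm_num) h
  have hψ : ∀ i, ∀ pq ∈ S, 0 < ψ i pq.2 ∧ ψ i pq.2 < 1 / (2 * Q ^ 2) := by
    intro i pq hpq
    obtain ⟨⟨h9, -, -⟩, -⟩ := hS pq hpq
    have hq : (Q : ℝ) < 9 * pq.2 := by exact_mod_cast h9
    have hψ0 := hpos i pq.2 (by exact_mod_cast (by omega : 0 < pq.2))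
    have := hsmall i pq.2 (by omega)
    exact ⟨hψ0, by rw [lt_div_iff₀ (by positivity)]; nlinarith⟩
  have hC : ∀ k i, ∀ pq ∈ S,
      (Ckset k (ψ i) pq.1 pq.2).Nonempty ∧ Ckset k (ψ i) pq.1 pq.2 ⊆ Metric.ball x₀ r := by
    intro k i pq hpq
    obtain ⟨-, hlo, hhi⟩ := hS pq hpq
    obtain ⟨hψ0, hψQ⟩ := hψ i pq hpq
    have : 1 / (2 * (Q : ℝ) ^ 2) ≤ 1 / Q := by
      rw [div_le_div_iff₀ (by positivity) (by positivity)]; nlinarith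
    exact Ckset_nonempty_and_subset_ball k hr hB hψ0 (by linarith) (by linarith)
  refine ⟨S, ?_, fun pq hpq => ?_, fun pq hpq => ?_, fun k _ i pq hpq => (hC k i pq hpq).2,
    fun k _ i pq hpq pq' hpq' hne => ?_⟩
  · exact_mod_cast (Int.floor_le _).trans (card_reducedFractionsIcc_ge hr hrQ hlog)
  · obtain ⟨-, hlo, hhi⟩ := hS pq hpq
    rw [Real.ball_eq_Ioo]
    constructor <;> linarith
  · obtain ⟨⟨h9, hqQ, hcop⟩, -⟩ := hS pq hpq
    exact ⟨by rw [div_le_iff₀ (by norm_num), mul_comm]; exact_mod_cast h9.le, hqQ, hcop⟩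
  · obtain ⟨⟨h9, hqQ, hcop⟩, -⟩ := hS pq hpq
    obtain ⟨⟨h9', hqQ', hcop'⟩, -⟩ := hS pq' hpq'
    exact one_div_two_mul_sq_lt_setDist (by omega) (by omega) hqQ hqQ'
      (div_ne_div_of_gcd_eq_one (by omega) (by omega) hcop hcop' hne)
      (hC k i pq hpq).1 (hC k i pq' hpq').1 (hψ i pq hpq).2 (hψ i pq' hpq').2
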